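/- arXiv:2002.11382 — 3 statements merged into one kernel-verified Lean document; each statement's English description precedes it below -/
import Mathlib

section
/- If f : [0,1] → ℝ is a positive, differentiable probability density whose logarithm is concave, then the reliability function F̄(x) = 1 - F(x) = ∫_x^1 f(t) dt is also log-concave on [0,1), i.e., log F̄ is concave. -/
/-!
With `F̄ x = ∫ t in x..b, f t`, log-concavity of `f` gives `f x * f (s + d) ≤ f (x + d) * f s`
whenever `x ≤ s` and `0 ≤ d`. Integrating in `s` over `[x, b - d]` gives
`f x * F̄ (x + d) ≤ f (x + d) * F̄ x`, i.e. the hazard rate `f / F̄` is nondecreasing.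
As `(log F̄)' = -f / F̄`, the derivative of `log F̄` is antitone, so `log F̄` is concave.
-/

open Real Set intervalIntegral
open MeasureTheory (volume ae_restrict_of_forall_mem)

theorem ConcaveOn.map_add_sub_map_le {s : Set ℝ} {g : ℝ → ℝ} (hg : ConcaveOn ℝ s g)
    {x y d : ℝ} (hx : x ∈ s) (hyd : y + d ∈ s) (hxy : x ≤ y) (hd : 0 ≤ d) :
    g (y + d) - g y ≤ g (x + d) - g x := by
  rcases (show x ≤ y + d by linarith).eq_or_lt with hxyd | hxyd
  · obtain rfl : y = x := by linarith
    obtain rfl : d = 0 := by linarith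
    simp
  -- `x + d` and `y` are the two points of `[x, y + d]` with swapped barycentric weights.
  have ht : y + d - x ≠ 0 := (sub_pos.2 hxyd).ne'
  have hu : 0 ≤ d / (y + d - x) := div_nonneg hd (sub_pos.2 hxyd).le
  have hv : 0 ≤ (y - x) / (y + d - x) := div_nonneg (sub_nonneg.2 hxy) (sub_pos.2 hxyd).le
  have hw : d / (y + d - x) + (y - x) / (y + d - x) = 1 := by field_simp; ring
  have h₁ := hg.2 hx hyd hv hu ((add_comm _ _).trans hw)
  have h₂ := hg.2 hx hyd hu hv hw
  have e₁ : ((y - x) / (y + d - x)) • x + (d / (y + d - x)) • (y + d) = x + d := by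
    simp only [smul_eq_mul]; field_simp; ring
  have e₂ : (d / (y + d - x)) • x + ((y - x) / (y + d - x)) • (y + d) = y := by
    simp only [smul_eq_mul]; field_simp; ring
  rw [e₁, smul_eq_mul, smul_eq_mul] at h₁
  rw [e₂, smul_eq_mul, smul_eq_mul] at h₂
  linear_combination h₁ + h₂ - (g x + g (y + d)) * hw

theorem mul_le_mul_of_concaveOn_log {s : Set ℝ} {f : ℝ → ℝ} (hpos : ∀ x ∈ s, 0 < f x)
    (hlog : ConcaveOn ℝ s fun x => log (f x)) {x y d : ℝ} (hx : x ∈ s) (hyd : y + d ∈ s)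
    (hxy : x ≤ y) (hd : 0 ≤ d) :
    f x * f (y + d) ≤ f (x + d) * f y := by
  have hs := hlog.1.ordConnected
  have hxd : x + d ∈ s := hs.out hx hyd ⟨by linarith, by linarith⟩
  have hy : y ∈ s := hs.out hx hyd ⟨hxy, by linarith⟩
  rw [← log_le_log_iff (mul_pos (hpos x hx) (hpos _ hyd)) (mul_pos (hpos _ hxd) (hpos y hy)),
    log_mul (hpos x hx).ne' (hpos _ hyd).ne', log_mul (hpos _ hxd).ne' (hpos y hy).ne']
  linarith [hlog.map_add_sub_map_le hx hyd hxy hd]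

section Survival

variable {f : ℝ → ℝ} {a b : ℝ}

theorem integral_pos_of_pos_on_Icc (hcont : ContinuousOn f (Icc a b))
    (hpos : ∀ x ∈ Icc a b, 0 < f x) {x : ℝ} (hx : x ∈ Ico a b) : 0 < ∫ t in x..b, f t :=
  intervalIntegral_pos_of_pos_on
    ((hcont.mono (Icc_subset_Icc_left hx.1)).intervalIntegrable_of_Icc hx.2.le)
    (fun t ht => hpos t ⟨hx.1.trans ht.1.le, ht.2.le⟩) hx.2

theorem mul_integral_le_mul_integral_of_concaveOn_log (hcont : ContinuousOn f (Icc a b))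
    (hpos : ∀ x ∈ Icc a b, 0 < f x) (hlog : ConcaveOn ℝ (Icc a b) fun x => log (f x))
    {x y : ℝ} (hx : a ≤ x) (hxy : x ≤ y) (hy : y ≤ b) :
    f x * ∫ t in y..b, f t ≤ f y * ∫ t in x..b, f t := by
  set d := y - x with hd
  have hxb : x ≤ b - d := by linarith
  have hshift : ∀ s ∈ Icc x (b - d), f x * f (s + d) ≤ f y * f s := fun s hs => by
    simpa only [hd, add_sub_cancel] using mul_le_mul_of_concaveOn_log hpos hlog ⟨hx, by linarith⟩
      ⟨by linarith [hs.1], by linarith [hs.2]⟩ hs.1 (sub_nonneg.2 hxy)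
  have hf_int : IntervalIntegrable f volume x (b - d) :=
    (hcont.mono (Icc_subset_Icc hx (by linarith))).intervalIntegrable_of_Icc hxb
  have hf_shift_int : IntervalIntegrable (fun s => f (s + d)) volume x (b - d) := by
    have := ((hcont.mono (Icc_subset_Icc_left (hx.trans hxy))).intervalIntegrable_of_Icc
      hy).comp_add_right d
    rwa [show y - d = x by ring] at this
  calc f x * ∫ t in y..b, f t = ∫ s in x..(b - d), f x * f (s + d) := by
        rw [integral_const_mul, integral_comp_add_right, sub_add_cancel, hd, add_sub_cancel]
    _ ≤ ∫ s in x..(b - d), f y * f s :=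
        integral_mono_on hxb (hf_shift_int.const_mul _) (hf_int.const_mul _) hshift
    _ = f y * ∫ s in x..(b - d), f s := integral_const_mul _ _
    _ ≤ f y * ∫ t in x..b, f t := by
        gcongr
        · exact (hpos y ⟨by linarith, hy⟩).le
        · exact integral_mono_interval le_rfl hxb (by linarith)
            (ae_restrict_of_forall_mem measurableSet_Ioc
              fun t ht => (hpos t ⟨hx.trans ht.1.le, ht.2⟩).le)
            ((hcont.mono (Icc_subset_Icc_left hx)).intervalIntegrable_of_Icc (by linarith))

theorem monotoneOn_div_integral_of_concaveOn_log (hcont : ContinuousOn f (Icc a b))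
    (hpos : ∀ x ∈ Icc a b, 0 < f x) (hlog : ConcaveOn ℝ (Icc a b) fun x => log (f x)) :
    MonotoneOn (fun x => f x / ∫ t in x..b, f t) (Ico a b) := fun x hx y hy hxy => by
  rw [div_le_div_iff₀ (integral_pos_of_pos_on_Icc hcont hpos hx)
    (integral_pos_of_pos_on_Icc hcont hpos hy)]
  exact mul_integral_le_mul_integral_of_concaveOn_log hcont hpos hlog hx.1 hxy hy.2.le

theorem hasDerivAt_integral_left_of_continuousOn (hcont : ContinuousOn f (Icc a b)) {x : ℝ}
    (hx : x ∈ Ioo a b) : HasDerivAt (fun u => ∫ t in u..b, f t) (-f x) x :=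
  integral_hasDerivAt_left
    ((hcont.mono (Icc_subset_Icc_left hx.1.le)).intervalIntegrable_of_Icc hx.2.le)
    ((hcont.mono Ioo_subset_Icc_self).stronglyMeasurableAtFilter isOpen_Ioo x hx)
    (hcont.continuousAt (Icc_mem_nhds hx.1 hx.2))

theorem concaveOn_log_integral_of_concaveOn_log (hcont : ContinuousOn f (Icc a b))
    (hpos : ∀ x ∈ Icc a b, 0 < f x) (hlog : ConcaveOn ℝ (Icc a b) fun x => log (f x)) :
    ConcaveOn ℝ (Ico a b) fun x => log (∫ t in x..b, f t) := by
  have hR := fun x (hx : x ∈ Ico a b) => integral_pos_of_pos_on_Icc hcont hpos hx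
  have hderiv : ∀ x ∈ Ioo a b, HasDerivAt (fun u => log (∫ t in u..b, f t))
      (-(f x / ∫ t in x..b, f t)) x := fun x hx => by
    simpa only [neg_div] using
      (hasDerivAt_integral_left_of_continuousOn hcont hx).log (hR x (Ioo_subset_Ico_self hx)).ne'
  have hRcont : ContinuousOn (fun x => ∫ t in x..b, f t) (Ico a b) := fun x hx => by
    have hab : a ≤ b := hx.1.trans hx.2.le
    refine (continuousOn_primitive_interval_left (a := a) ?_).mono ?_ x hx <;> rw [uIcc_of_le hab]
    exacts [hcont.integrableOn_Icc, Ico_subset_Icc_self]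
  refine AntitoneOn.concaveOn_of_deriv (convex_Ico a b)
    (hRcont.log fun x hx => (hR x hx).ne') ?_ ?_ <;> rw [interior_Ico]
  · exact fun x hx => (hderiv x hx).differentiableAt.differentiableWithinAt
  · intro x hx y hy hxy
    rw [(hderiv x hx).deriv, (hderiv y hy).deriv, neg_le_neg_iff]
    exact monotoneOn_div_integral_of_concaveOn_log hcont hpos hlog
      (Ioo_subset_Ico_self hx) (Ioo_subset_Ico_self hy) hxy

end Survival

theorem logconcave_reliability_general
    (f : ℝ → ℝ)
    (hpos : ∀ x ∈ Icc (0:ℝ) 1, 0 < f x)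
    (hdiff : DifferentiableOn ℝ f (Icc (0:ℝ) 1))
    (hlogconc : ConcaveOn ℝ (Icc (0:ℝ) 1) (fun x => Real.log (f x))) :
    ConcaveOn ℝ (Ico (0:ℝ) 1) (fun x => Real.log (∫ t in x..1, f t)) :=
  concaveOn_log_integral_of_concaveOn_log hdiff.continuousOn hpos hlogconc

/-- If `f` is a positive, differentiable probability density on `[0,1]` whose logarithm is
concave, then the reliability function `F̄(x) = 1 - F(x) = ∫_x^1 f` is log-concave on `[0,1)`. -/
theorem logconcave_reliability
    (f : ℝ → ℝ)
    (hpos : ∀ x ∈ Icc (0:ℝ) 1, 0 < f x)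
    (hdiff : DifferentiableOn ℝ f (Icc (0:ℝ) 1))
    (hdensity : ∫ t in (0:ℝ)..1, f t = 1)
    (hlogconc : ConcaveOn ℝ (Icc (0:ℝ) 1) (fun x => Real.log (f x))) :
    ConcaveOn ℝ (Ico (0:ℝ) 1) (fun x => Real.log (∫ t in x..1, f t)) :=
  logconcave_reliability_general f hpos hdiff hlogconc
end

section
/- Let F̄ : [0,1] → (0,∞) be log-concave and w : [0,1] → ℝ be concave and nonnegative. Then for nonnegative c_1, …, c_n with c_1 + ⋯ + c_n = 1, the quantity (∏_{i=1}^n F̄(c_i)) · (∑_{i=1}^n w(c_i)) is at most F̄(1/n)^n · n · w(1/n). -/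
/-! Jensen's inequality with equal weights `1/n` bounds the two factors separately by their
values at the mean share `1/n`: applied to `w` it bounds the sum, and applied to `log ∘ Fbar`
it bounds the logarithm of the product. Both factors are nonnegative, so the bounds multiply. -/

open Real Set Finset

section Jensen

variable {E ι : Type*} [AddCommGroup E] [Module ℝ E] {s : Set E} {f : E → ℝ}
  [Fintype ι] [Nonempty ι] {x : ι → E}

theorem ConcaveOn.sum_le_card_mul_map_mean (hf : ConcaveOn ℝ s f) (hx : ∀ i, x i ∈ s) :
    ∑ i, f (x i) ≤ Fintype.card ι * f ((Fintype.card ι : ℝ)⁻¹ • ∑ i, x i) := by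
  have hcard : (0 : ℝ) < Fintype.card ι := by exact_mod_cast Fintype.card_pos
  have hweights : ∑ _i : ι, (Fintype.card ι : ℝ)⁻¹ = 1 := by
    simp [Finset.card_univ, hcard.ne']
  have hjensen := hf.le_map_sum (fun _ _ => inv_nonneg.2 hcard.le) hweights (fun i _ => hx i)
  rw [← Finset.smul_sum, ← Finset.smul_sum, smul_eq_mul] at hjensen
  rwa [← inv_mul_le_iff₀ hcard]

theorem Convex.inv_card_smul_sum_mem (hs : Convex ℝ s) (hx : ∀ i, x i ∈ s) :
    (Fintype.card ι : ℝ)⁻¹ • ∑ i, x i ∈ s := by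
  have hcard : (0 : ℝ) < Fintype.card ι := by exact_mod_cast Fintype.card_pos
  rw [Finset.smul_sum]
  refine hs.sum_mem (fun _ _ => inv_nonneg.2 hcard.le) ?_ (fun i _ => hx i)
  simp [Finset.card_univ, hcard.ne']

theorem ConcaveOn.prod_le_map_mean_pow_card_of_log
    (hf : ConcaveOn ℝ s (fun y => log (f y))) (hpos : ∀ y ∈ s, 0 < f y) (hx : ∀ i, x i ∈ s) :
    ∏ i, f (x i) ≤ f ((Fintype.card ι : ℝ)⁻¹ • ∑ i, x i) ^ Fintype.card ι := by
  have hmean_pos := hpos _ (hf.1.inv_card_smul_sum_mem hx)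
  rw [← log_le_log_iff (prod_pos fun i _ => hpos _ (hx i)) (by positivity),
    log_prod fun i _ => (hpos _ (hx i)).ne', log_pow]
  exact hf.sum_le_card_mul_map_mean hx

end Jensen

theorem prod_mul_sum_le_general
    (Fbar w : ℝ → ℝ)
    (hpos : ∀ x ∈ Icc (0:ℝ) 1, 0 < Fbar x)
    (hlogconc : ConcaveOn ℝ (Icc (0:ℝ) 1) (fun x => Real.log (Fbar x)))
    (hwconc : ConcaveOn ℝ (Icc (0:ℝ) 1) w)
    (hwnonneg : ∀ x ∈ Icc (0:ℝ) 1, 0 ≤ w x)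
    (n : ℕ)
    (c : Fin n → ℝ)
    (hc : ∀ i, 0 ≤ c i)
    (hsum : ∑ i, c i = 1) :
    (∏ i, Fbar (c i)) * (∑ i, w (c i)) ≤ (Fbar (1 / n)) ^ n * (n * w (1 / n)) := by
  have : Nonempty (Fin n) := by
    by_contra hempty
    simp [not_nonempty_iff.1 hempty] at hsum
  have hmem : ∀ i, c i ∈ Icc (0:ℝ) 1 := fun i =>
    ⟨hc i, hsum ▸ single_le_sum (fun j _ => hc j) (mem_univ i)⟩
  have hmean : ((Fintype.card (Fin n) : ℝ)⁻¹ • ∑ i, c i) = 1 / n := by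
    simp [hsum]
  have hmean_mem := hmean ▸ hwconc.1.inv_card_smul_sum_mem hmem
  have hprod := hlogconc.prod_le_map_mean_pow_card_of_log hpos hmem
  have hsumw := hwconc.sum_le_card_mul_map_mean hmem
  rw [hmean, Fintype.card_fin] at hprod hsumw
  exact mul_le_mul hprod hsumw (sum_nonneg fun i _ => hwnonneg _ (hmem i))
    (pow_nonneg (hpos _ hmean_mem).le n)

/-- If `Fbar` is positive log-concave and `w` is nonnegative concave on `[0,1]`, then for
nonnegative cost shares summing to `1`,
`(∏ Fbar(c i)) · (∑ w(c i)) ≤ Fbar(1/n)^n · n · w(1/n)`. -/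
theorem prod_mul_sum_le
    (Fbar w : ℝ → ℝ)
    (hpos : ∀ x ∈ Icc (0:ℝ) 1, 0 < Fbar x)
    (hlogconc : ConcaveOn ℝ (Icc (0:ℝ) 1) (fun x => Real.log (Fbar x)))
    (hwconc : ConcaveOn ℝ (Icc (0:ℝ) 1) w)
    (hwnonneg : ∀ x ∈ Icc (0:ℝ) 1, 0 ≤ w x)
    (n : ℕ) (hn : 1 ≤ n)
    (c : Fin n → ℝ)
    (hc : ∀ i, 0 ≤ c i)
    (hsum : ∑ i, c i = 1) :
    (∏ i, Fbar (c i)) * (∑ i, w (c i)) ≤ (Fbar (1 / n)) ^ n * (n * w (1 / n)) :=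
  prod_mul_sum_le_general Fbar w hpos hlogconc hwconc hwnonneg n c hc hsum
end

section
/- Let F̄ : [0,1] → (0,∞) be log-concave, w : [0,1] → ℝ≥0 be concave, and F = 1 - F̄ be concave (i.e., the density is nonincreasing). For any nonnegative a, b, c with a + b + c = 1, F̄(a)·F̄(b)·F̄(c)·(w(a) + w(b) + w(c)) + 2·F̄(1/2)^2·w(1/2)·(F(a) + F(b) + F(c)) ≤ F̄(1/3)^3·3·w(1/3) + 2·F̄(1/2)^2·w(1/2)·3·F(1/3). -/
/-!
Equal shares maximise each factor separately: Jensen's inequality at the barycentre `1/3`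
bounds `F̄ a F̄ b F̄ c` (log-concavity), `w a + w b + w c` and `F a + F b + F c` (concavity),
and all the quantities involved are nonnegative, so the bounds multiply and add up.
-/

open Real Set

theorem Convex.add_add_div_three_mem {s : Set ℝ} (hs : Convex ℝ s) {x y z : ℝ}
    (hx : x ∈ s) (hy : y ∈ s) (hz : z ∈ s) : (x + y + z) / 3 ∈ s := by
  have mem := hs.sum_mem (t := Finset.univ) (w := fun _ : Fin 3 => (1 / 3 : ℝ))
    (z := ![x, y, z]) (by norm_num) (by norm_num) (fun i _ => by fin_cases i <;> assumption)
  simp only [Fin.sum_univ_three, smul_eq_mul, Matrix.cons_val] at mem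
  convert mem using 1
  ring

theorem ConcaveOn.add_add_le_three_mul_map_div_three {s : Set ℝ} {f : ℝ → ℝ}
    (hf : ConcaveOn ℝ s f) {x y z : ℝ} (hx : x ∈ s) (hy : y ∈ s) (hz : z ∈ s) :
    f x + f y + f z ≤ 3 * f ((x + y + z) / 3) := by
  have jensen := hf.le_map_sum (t := Finset.univ) (w := fun _ : Fin 3 => (1 / 3 : ℝ))
    (p := ![x, y, z]) (by norm_num) (by norm_num) (fun i _ => by fin_cases i <;> assumption)
  simp only [Fin.sum_univ_three, smul_eq_mul, Matrix.cons_val] at jensen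
  calc f x + f y + f z = 3 * (1 / 3 * f x + 1 / 3 * f y + 1 / 3 * f z) := by ring
    _ ≤ 3 * f (1 / 3 * x + 1 / 3 * y + 1 / 3 * z) := by gcongr
    _ = 3 * f ((x + y + z) / 3) := by ring_nf

theorem ConcaveOn.mul_mul_le_map_div_three_pow_of_log {s : Set ℝ} {f : ℝ → ℝ}
    (hpos : ∀ x ∈ s, 0 < f x) (hlog : ConcaveOn ℝ s fun x => log (f x))
    {x y z : ℝ} (hx : x ∈ s) (hy : y ∈ s) (hz : z ∈ s) :
    f x * f y * f z ≤ f ((x + y + z) / 3) ^ 3 := by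
  have hfx := hpos x hx
  have hfy := hpos y hy
  have hfz := hpos z hz
  have hm : 0 < f ((x + y + z) / 3) :=
    hpos _ (hlog.1.add_add_div_three_mem hx hy hz)
  rw [← log_le_log_iff (by positivity) (by positivity), log_mul (by positivity) hfz.ne',
    log_mul hfx.ne' hfy.ne', log_pow]
  push_cast
  exact hlog.add_add_le_three_mul_map_div_three hx hy hz

theorem three_agent_welfare_inequality_general
    (Fbar w F : ℝ → ℝ)
    (hpos : ∀ x ∈ Icc (0:ℝ) 1, 0 < Fbar x)
    (hlogconc : ConcaveOn ℝ (Icc (0:ℝ) 1) (fun x => Real.log (Fbar x)))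
    (hwconc : ConcaveOn ℝ (Icc (0:ℝ) 1) w)
    (hwnonneg : ∀ x ∈ Icc (0:ℝ) 1, 0 ≤ w x)
    (hFconc : ConcaveOn ℝ (Icc (0:ℝ) 1) F)
    (a b c : ℝ) (ha : 0 ≤ a) (hb : 0 ≤ b) (hc : 0 ≤ c)
    (hsum : a + b + c = 1) :
    Fbar a * Fbar b * Fbar c * (w a + w b + w c)
      + 2 * (Fbar (1/2))^2 * w (1/2) * (F a + F b + F c)
    ≤ (Fbar (1/3))^3 * (3 * w (1/3))
      + 2 * (Fbar (1/2))^2 * w (1/2) * (3 * F (1/3)) := by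
  have ha' : a ∈ Icc (0:ℝ) 1 := ⟨ha, by linarith⟩
  have hb' : b ∈ Icc (0:ℝ) 1 := ⟨hb, by linarith⟩
  have hc' : c ∈ Icc (0:ℝ) 1 := ⟨hc, by linarith⟩
  have hthird : (a + b + c) / 3 = 1 / 3 := by rw [hsum]
  have hprod := hlogconc.mul_mul_le_map_div_three_pow_of_log hpos ha' hb' hc'
  have hw := hwconc.add_add_le_three_mul_map_div_three ha' hb' hc'
  have hF := hFconc.add_add_le_three_mul_map_div_three ha' hb' hc'
  rw [hthird] at hprod hw hF
  have hw_sum_nonneg : 0 ≤ w a + w b + w c := by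
    linarith [hwnonneg a ha', hwnonneg b hb', hwnonneg c hc']
  have hcoef : 0 ≤ 2 * Fbar (1/2) ^ 2 * w (1/2) := by
    have := hwnonneg (1/2) ⟨by norm_num, by norm_num⟩
    positivity
  have hFbar_third_pos : 0 < Fbar (1/3) := hpos (1/3) ⟨by norm_num, by norm_num⟩
  exact add_le_add (mul_le_mul hprod hw hw_sum_nonneg (by positivity))
    (mul_le_mul_of_nonneg_left hF hcoef)

/-- Combined inequality for the 3-agent excludable public project (welfare objective):
equal shares maximize the sum of the size-3 and size-2 coalition welfare terms. -/
theorem three_agent_welfare_inequality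
    (Fbar w F : ℝ → ℝ)
    (hpos : ∀ x ∈ Icc (0:ℝ) 1, 0 < Fbar x)
    (hlogconc : ConcaveOn ℝ (Icc (0:ℝ) 1) (fun x => Real.log (Fbar x)))
    (hwconc : ConcaveOn ℝ (Icc (0:ℝ) 1) w)
    (hwnonneg : ∀ x ∈ Icc (0:ℝ) 1, 0 ≤ w x)
    (hFdef : ∀ x, F x = 1 - Fbar x)
    (hFconc : ConcaveOn ℝ (Icc (0:ℝ) 1) F)
    (a b c : ℝ) (ha : 0 ≤ a) (hb : 0 ≤ b) (hc : 0 ≤ c)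
    (hsum : a + b + c = 1) :
    Fbar a * Fbar b * Fbar c * (w a + w b + w c)
      + 2 * (Fbar (1/2))^2 * w (1/2) * (F a + F b + F c)
    ≤ (Fbar (1/3))^3 * (3 * w (1/3))
      + 2 * (Fbar (1/2))^2 * w (1/2) * (3 * F (1/3)) :=
  three_agent_welfare_inequality_general Fbar w F hpos hlogconc hwconc hwnonneg hFconc a b c ha hb
    hc hsum
end
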